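/- arXiv:2203.10280 — 2 statements merged into one kernel-verified Lean document; each statement's English description precedes it below -/
import Mathlib

section
/- Bernstein's inequality: Let X_1,...,X_n be independent random variables with X_i ∈ [a,b] for all i, where -∞ < a ≤ b < +∞. Let X̄ = (1/n)(X_1+...+X_n) and σ² = Σ_{i=1}^n Var[X_i]. Then for any t > 0, P(X̄ - E[X̄] ≥ t) ≤ exp(-n t² / (2σ² + 2t(b-a)/3)). -/
/-!
Chernoff's method: for `l ≥ 0`, independence gives
`P(S - E S ≥ s) ≤ e^{-l s} ∏ E e^{l (X_i - E X_i)}`.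
If `X_i - E X_i ≤ c` and `l c < 3`, comparing the exponential series with a geometric series
gives `e^x ≤ 1 + x + x² / (2 (1 - l c / 3))` for `x ≤ l c`, so each factor is at most
`1 + l² Var X_i / (2 (1 - l c / 3)) ≤ exp (l² Var X_i / (2 (1 - l c / 3)))`.
Taking `l = 2 s / (2 σ² + s c)` bounds the product by `exp (-s² / (2 σ² + 2 s c / 3))`, and
`s = n t` gives the bound for the mean, since
`n t² / (2 σ² + 2 t c / 3) ≤ (n t)² / (2 σ² + 2 n t c / 3)` for `n ≥ 1`.
-/

open MeasureTheory ProbabilityTheory Real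
open scoped Nat

namespace Real

theorem exp_le_one_add_add_sq_div_two_of_nonpos {x : ℝ} (hx : x ≤ 0) :
    exp x ≤ 1 + x + x ^ 2 / 2 := by
  have hderiv (y : ℝ) : HasDerivAt (fun z ↦ 1 + z + z ^ 2 / 2 - exp z) (1 + y - exp y) y :=
    ((((hasDerivAt_id y).const_add 1).add ((hasDerivAt_pow 2 y).div_const 2)).sub
      (hasDerivAt_exp y)).congr_deriv (by norm_num)
  have hanti : Antitone (fun z ↦ 1 + z + z ^ 2 / 2 - exp z) :=
    antitone_of_deriv_nonpos (fun y ↦ (hderiv y).differentiableAt) fun y ↦ by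
      rw [(hderiv y).deriv]
      linarith [add_one_le_exp y]
  simpa using hanti hx

theorem pow_add_two_div_factorial_le {x : ℝ} (hx : 0 ≤ x) (k : ℕ) :
    x ^ (k + 2) / (k + 2)! ≤ x ^ 2 / 2 * (x / 3) ^ k := by
  have hfact : (2 * 3 ^ k : ℝ) ≤ (k + 2)! := by
    exact_mod_cast (add_comm k 2 ▸ Nat.factorial_mul_pow_le_factorial (m := 2) (n := k))
  calc x ^ (k + 2) / (k + 2)! ≤ x ^ (k + 2) / (2 * 3 ^ k) := by gcongr
    _ = x ^ 2 / 2 * (x / 3) ^ k := by rw [div_pow]; ring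

theorem exp_le_one_add_add_sq_div_of_nonneg {x : ℝ} (hx0 : 0 ≤ x) (hx3 : x < 3) :
    exp x ≤ 1 + x + x ^ 2 / (2 * (1 - x / 3)) := by
  have hsum : Summable (fun k : ℕ ↦ x ^ k / k !) := summable_pow_div_factorial x
  have hq0 : 0 ≤ x / 3 := by positivity
  have hq1 : x / 3 < 1 := by linarith
  have htail : ∑' k : ℕ, x ^ (k + 2) / (k + 2)! ≤ x ^ 2 / (2 * (1 - x / 3)) := by
    calc ∑' k : ℕ, x ^ (k + 2) / (k + 2)! ≤ ∑' k : ℕ, x ^ 2 / 2 * (x / 3) ^ k :=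
          Summable.tsum_le_tsum (pow_add_two_div_factorial_le hx0)
            ((summable_nat_add_iff 2).mpr hsum)
            ((summable_geometric_of_lt_one hq0 hq1).mul_left _)
      _ = x ^ 2 / (2 * (1 - x / 3)) := by
          rw [tsum_mul_left, tsum_geometric_of_lt_one hq0 hq1]
          field_simp
  have hexp : exp x = ∑' k : ℕ, x ^ k / k ! := by
    rw [exp_eq_exp_ℝ, NormedSpace.exp_eq_tsum_div]
  rw [hexp, ← hsum.sum_add_tsum_nat_add 2]
  simpa [Finset.sum_range_succ] using htail

theorem exp_le_one_add_add_sq_div_of_le {x u : ℝ} (hxu : x ≤ u) (hu0 : 0 ≤ u) (hu3 : u < 3) :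
    exp x ≤ 1 + x + x ^ 2 / (2 * (1 - u / 3)) := by
  rcases le_or_gt x 0 with hx | hx
  · calc exp x ≤ 1 + x + x ^ 2 / 2 := exp_le_one_add_add_sq_div_two_of_nonpos hx
      _ ≤ 1 + x + x ^ 2 / (2 * (1 - u / 3)) := by
          gcongr
          · linarith
          · linarith
  · calc exp x ≤ 1 + x + x ^ 2 / (2 * (1 - x / 3)) :=
          exp_le_one_add_add_sq_div_of_nonneg hx.le (hxu.trans_lt hu3)
      _ ≤ 1 + x + x ^ 2 / (2 * (1 - u / 3)) := by
          gcongr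
          linarith

end Real

namespace ProbabilityTheory

noncomputable def bernsteinExponent (v c s : ℝ) : ℝ := s ^ 2 / (2 * v + 2 * s * c / 3)

theorem exists_bernstein_parameter {v c s : ℝ} (hv : 0 ≤ v) (hc : 0 ≤ c) (hs : 0 ≤ s) :
    ∃ l, 0 ≤ l ∧ l * c < 3 ∧
      l ^ 2 * v / (2 * (1 - l * c / 3)) - l * s ≤ -bernsteinExponent v c s := by
  have hsc : 0 ≤ s * c := mul_nonneg hs hc
  rcases (by positivity : 0 ≤ 2 * v + s * c).eq_or_lt with hD | hD
  · refine ⟨0, le_rfl, by norm_num, ?_⟩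
    have hden : 2 * v + 2 * s * c / 3 = 0 := by linarith
    simp [bernsteinExponent, hden]
  -- The minimizer `s / (v + s * c / 3)` of the left side violates `l * c < 3` when `v = 0`.
  refine ⟨2 * s / (2 * v + s * c), by positivity, ?_, ?_⟩
  · rw [div_mul_eq_mul_div, div_lt_iff₀ hD]
    linarith
  · have hq : 1 - 2 * s / (2 * v + s * c) * c / 3 = (6 * v + s * c) / (3 * (2 * v + s * c)) := by
      field_simp
      ring
    have h6 : 0 < v * 6 + s * c := by linarith
    have h3 : 0 < v * 3 + s * c := by linarith
    rw [hq, bernsteinExponent, ← sub_nonneg]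
    field_simp
    nlinarith [sq_nonneg (s * (s * c))]

theorem mul_bernsteinExponent_le {n v c t : ℝ} (hn : 1 ≤ n) (hv : 0 ≤ v) (hc : 0 ≤ c)
    (ht : 0 ≤ t) : n * bernsteinExponent v c t ≤ bernsteinExponent v c (n * t) := by
  unfold bernsteinExponent
  rcases (by positivity : 0 ≤ 2 * v + 2 * t * c / 3).eq_or_lt with hA | hA
  · rw [← hA, div_zero, mul_zero]
    positivity
  calc n * (t ^ 2 / (2 * v + 2 * t * c / 3)) = (n * t) ^ 2 / (n * (2 * v + 2 * t * c / 3)) := by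
        field_simp
    _ ≤ (n * t) ^ 2 / (2 * v + 2 * (n * t) * c / 3) := by
        gcongr
        · nlinarith [mul_nonneg ht hc]
        · nlinarith

variable {Ω : Type*} [MeasurableSpace Ω] {μ : Measure Ω} [IsProbabilityMeasure μ]

theorem mgf_sub_integral_le_exp_variance {X : Ω → ℝ} {c l : ℝ} (hX : MemLp X 2 μ)
    (hc : 0 ≤ c) (hle : ∀ᵐ ω ∂μ, X ω - μ[X] ≤ c) (hl : 0 ≤ l) (hlc : l * c < 3) :
    mgf (fun ω ↦ X ω - μ[X]) μ l ≤ exp (l ^ 2 * Var[X; μ] / (2 * (1 - l * c / 3))) := by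
  set Y : Ω → ℝ := fun ω ↦ X ω - μ[X]
  set K : ℝ := l ^ 2 / (2 * (1 - l * c / 3))
  have hY : MemLp Y 2 μ := hX.sub (memLp_const _)
  have hYint : Integrable Y μ := hY.integrable one_le_two
  have hmean : μ[Y] = 0 := by
    simp [Y, integral_sub (hX.integrable one_le_two) (integrable_const _)]
  have hvar : Var[X; μ] = ∫ ω, Y ω ^ 2 ∂μ :=
    variance_eq_integral hX.aestronglyMeasurable.aemeasurable
  have hexp_int : Integrable (fun ω ↦ exp (l * Y ω)) μ :=
    integrable_exp_mul_of_le l c hl hY.aestronglyMeasurable.aemeasurable hle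
  have hquad : ∀ᵐ ω ∂μ, exp (l * Y ω) ≤ 1 + l * Y ω + K * Y ω ^ 2 := by
    filter_upwards [hle] with ω hω
    calc exp (l * Y ω) ≤ 1 + l * Y ω + (l * Y ω) ^ 2 / (2 * (1 - l * c / 3)) :=
          exp_le_one_add_add_sq_div_of_le (by gcongr) (by positivity) hlc
      _ = 1 + l * Y ω + K * Y ω ^ 2 := by ring
  have hlin : Integrable (fun ω ↦ 1 + l * Y ω) μ :=
    (integrable_const 1).add (hYint.const_mul l)
  have hsq : Integrable (fun ω ↦ K * Y ω ^ 2) μ := hY.integrable_sq.const_mul K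
  calc mgf Y μ l ≤ ∫ ω, (1 + l * Y ω + K * Y ω ^ 2) ∂μ :=
        integral_mono_ae hexp_int (hlin.add hsq) hquad
    _ = K * Var[X; μ] + 1 := by
        rw [integral_add hlin hsq, integral_add (integrable_const 1) (hYint.const_mul l),
          integral_const_mul, integral_const_mul, hmean, hvar]
        simp [add_comm]
    _ ≤ exp (K * Var[X; μ]) := add_one_le_exp _
    _ = exp (l ^ 2 * Var[X; μ] / (2 * (1 - l * c / 3))) := by rw [div_mul_eq_mul_div]

variable {ι : Type*} [Fintype ι] {X : ι → Ω → ℝ} {c : ℝ}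

theorem measure_sum_sub_integral_ge_le_exp_mul (hmeas : ∀ i, Measurable (X i))
    (hindep : iIndepFun X μ) (hX : ∀ i, MemLp (X i) 2 μ) (hc : 0 ≤ c)
    (hle : ∀ i, ∀ᵐ ω ∂μ, X i ω - μ[X i] ≤ c) {l : ℝ} (hl : 0 ≤ l) (hlc : l * c < 3)
    (s : ℝ) :
    μ.real {ω | s ≤ ∑ i, (X i ω - μ[X i])} ≤
      exp (l ^ 2 * (∑ i, Var[X i; μ]) / (2 * (1 - l * c / 3)) - l * s) := by
  set Y : ι → Ω → ℝ := fun i ω ↦ X i ω - μ[X i]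
  have hYmeas (i : ι) : Measurable (Y i) := (hmeas i).sub_const _
  have hYindep : iIndepFun Y μ :=
    (hindep.comp (fun i (x : ℝ) ↦ x - μ[X i]) fun _ ↦ measurable_id.sub_const _ :)
  have hmgf (i : ι) : mgf (Y i) μ l ≤ exp (l ^ 2 * Var[X i; μ] / (2 * (1 - l * c / 3))) :=
    mgf_sub_integral_le_exp_variance (hX i) hc (hle i) hl hlc
  have hint : Integrable (fun ω ↦ exp (l * (∑ i, Y i) ω)) μ :=
    hYindep.integrable_exp_mul_sum hYmeas fun i _ ↦
      integrable_exp_mul_of_le l c hl (hYmeas i).aemeasurable (hle i)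
  calc μ.real {ω | s ≤ ∑ i, (X i ω - μ[X i])} = μ.real {ω | s ≤ (∑ i, Y i) ω} := by
        simp [Y]
    _ ≤ exp (-l * s) * ∏ i, mgf (Y i) μ l := by
        rw [← hYindep.mgf_sum hYmeas]
        exact measure_ge_le_exp_mul_mgf s hl hint
    _ ≤ exp (-l * s) * ∏ i, exp (l ^ 2 * Var[X i; μ] / (2 * (1 - l * c / 3))) := by
        gcongr with i
        exacts [fun _ _ ↦ mgf_nonneg, hmgf i]
    _ = exp (l ^ 2 * (∑ i, Var[X i; μ]) / (2 * (1 - l * c / 3)) - l * s) := by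
        rw [← exp_sum, ← exp_add, ← Finset.sum_div, ← Finset.mul_sum]
        ring_nf

theorem measure_sum_sub_integral_ge_le_bernstein (hmeas : ∀ i, Measurable (X i))
    (hindep : iIndepFun X μ) (hX : ∀ i, MemLp (X i) 2 μ) (hc : 0 ≤ c)
    (hle : ∀ i, ∀ᵐ ω ∂μ, X i ω - μ[X i] ≤ c) {s : ℝ} (hs : 0 ≤ s) :
    μ.real {ω | s ≤ ∑ i, (X i ω - μ[X i])} ≤
      exp (-bernsteinExponent (∑ i, Var[X i; μ]) c s) := by
  obtain ⟨l, hl, hlc, hexponent⟩ :=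
    exists_bernstein_parameter (Finset.sum_nonneg fun i _ ↦ variance_nonneg (X i) μ) hc hs
  exact (measure_sum_sub_integral_ge_le_exp_mul hmeas hindep hX hc hle hl hlc s).trans
    (exp_le_exp.mpr hexponent)

end ProbabilityTheory

/-- Bernstein's inequality. -/
theorem bernstein_inequality
    {Ω : Type*} [MeasurableSpace Ω] (μ : Measure Ω) [IsProbabilityMeasure μ]
    (n : ℕ) (hn : 0 < n) (X : Fin n → Ω → ℝ) (a b : ℝ) (hab : a ≤ b)
    (hmeas : ∀ i, Measurable (X i))
    (hbound : ∀ i, ∀ᵐ ω ∂μ, X i ω ∈ Set.Icc a b)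
    (hindep : iIndepFun X μ)
    (σ2 : ℝ) (hσ2 : σ2 = ∑ i, variance (X i) μ)
    (t : ℝ) (ht : 0 < t) :
    (μ {ω | (∑ i, X i ω) / n - (∫ ω, (∑ i, X i ω) / n ∂μ) ≥ t}).toReal
      ≤ Real.exp (-(n * t ^ 2) / (2 * σ2 + 2 * t * (b - a) / 3)) := by
  subst hσ2
  have hX (i : Fin n) : MemLp (X i) 2 μ :=
    memLp_of_bounded (hbound i) (hmeas i).aestronglyMeasurable 2
  have hle (i : Fin n) : ∀ᵐ ω ∂μ, X i ω - μ[X i] ≤ b - a := by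
    have ha : a ≤ μ[X i] := by
      simpa using integral_mono_ae (integrable_const a) ((hX i).integrable one_le_two)
        ((hbound i).mono fun _ h ↦ h.1)
    filter_upwards [hbound i] with ω hω
    linarith [hω.2]
  have hnpos : (0 : ℝ) < n := by exact_mod_cast hn
  have hevent : {ω | (∑ i, X i ω) / n - (∫ ω, (∑ i, X i ω) / n ∂μ) ≥ t}
      = {ω | n * t ≤ ∑ i, (X i ω - μ[X i])} := by
    ext ω
    rw [Set.mem_ofPred_eq, Set.mem_ofPred_eq, integral_div,
      integral_finsetSum _ fun i _ ↦ (hX i).integrable one_le_two, ← sub_div,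
      ← Finset.sum_sub_distrib, ge_iff_le, le_div_iff₀ hnpos, mul_comm t]
  calc (μ {ω | (∑ i, X i ω) / n - (∫ ω, (∑ i, X i ω) / n ∂μ) ≥ t}).toReal
      = μ.real {ω | n * t ≤ ∑ i, (X i ω - μ[X i])} := by rw [hevent]; rfl
    _ ≤ exp (-bernsteinExponent (∑ i, Var[X i; μ]) (b - a) (n * t)) :=
        measure_sum_sub_integral_ge_le_bernstein hmeas hindep hX (sub_nonneg.mpr hab)
          hle (by positivity)
    _ ≤ exp (-(n * bernsteinExponent (∑ i, Var[X i; μ]) (b - a) t)) :=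
        exp_le_exp.mpr <| neg_le_neg <| mul_bernsteinExponent_le (by exact_mod_cast hn)
          (Finset.sum_nonneg fun i _ ↦ variance_nonneg (X i) μ) (sub_nonneg.mpr hab) ht.le
    _ = exp (-(n * t ^ 2) / (2 * ∑ i, Var[X i; μ] + 2 * t * (b - a) / 3)) := by
        rw [bernsteinExponent, mul_div_assoc', neg_div]
end

section
/- Hoeffding's inequality: Let X_1,...,X_n be independent random variables with X_i ∈ [a,b] for all i, where -∞ < a ≤ b < +∞. Let X̄ = (1/n)(X_1+...+X_n). Then for any t > 0, P(X̄ - E[X̄] ≥ t) ≤ exp(-2n t² / (b-a)²). -/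
open MeasureTheory ProbabilityTheory Real

/-! By Hoeffding's lemma, a random variable with values in `[a, b]` is, once centered,
sub-Gaussian with variance proxy `(b - a)² / 4`. Variance proxies of independent summands add,
so the Chernoff bound for the centered sum `∑ (Xᵢ - E Xᵢ)` at level `n t` gives
`exp (-(n t)² / (2 n (b - a)² / 4)) = exp (-2 n t² / (b - a)²)`. -/

lemma measureReal_sum_sub_integral_ge_le {Ω ι : Type*} [MeasurableSpace Ω] [Fintype ι]
    {μ : Measure Ω} {X : ι → Ω → ℝ} (h_indep : iIndepFun X μ)
    (h_meas : ∀ i, AEMeasurable (X i) μ) {a b : ℝ}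
    (h_bound : ∀ i, ∀ᵐ ω ∂μ, X i ω ∈ Set.Icc a b) {ε : ℝ} (hε : 0 ≤ ε) :
    μ.real {ω | ε ≤ ∑ i, (X i ω - μ[X i])} ≤
      exp (-2 * ε ^ 2 / (Fintype.card ι * (b - a) ^ 2)) := by
  have := h_indep.isProbabilityMeasure
  have h_centered : iIndepFun (fun i ω ↦ X i ω - μ[X i]) μ :=
    (h_indep.comp (fun i x ↦ x - μ[X i]) fun _ ↦ measurable_sub_const _ :)
  refine (HasSubgaussianMGF.measure_sum_ge_le_of_iIndepFun h_centered
    (fun i _ ↦ hasSubgaussianMGF_of_mem_Icc (h_meas i) (h_bound i)) hε).trans_eq ?_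
  push_cast
  rw [Finset.sum_const, Finset.card_univ, nsmul_eq_mul, Real.norm_eq_abs, div_pow, sq_abs,
    show 2 * (Fintype.card ι * ((b - a) ^ 2 / 2 ^ 2)) = Fintype.card ι * (b - a) ^ 2 / 2 by ring,
    div_div_eq_mul_div]
  congr 1
  ring

theorem hoeffding_inequality_general
    {Ω : Type*} [MeasurableSpace Ω] (μ : Measure Ω) [IsProbabilityMeasure μ]
    (n : ℕ) (hn : 0 < n) (X : Fin n → Ω → ℝ) (a b : ℝ)
    (hmeas : ∀ i, Measurable (X i))
    (hbound : ∀ i, ∀ᵐ ω ∂μ, X i ω ∈ Set.Icc a b)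
    (hindep : iIndepFun X μ)
    (t : ℝ) (ht : 0 < t) :
    (μ {ω | (∑ i, X i ω) / n - (∫ ω, (∑ i, X i ω) / n ∂μ) ≥ t}).toReal
      ≤ Real.exp (-(2 * n * t ^ 2) / (b - a) ^ 2) := by
  have hn' : (0 : ℝ) < n := Nat.cast_pos.2 hn
  have h_mean : ∫ ω, (∑ i, X i ω) / n ∂μ = (∑ i, μ[X i]) / n := by
    rw [integral_div, integral_finsetSum _ fun i _ ↦
      Integrable.of_mem_Icc a b (hmeas i).aemeasurable (hbound i)]
  have h_event : {ω | (∑ i, X i ω) / n - (∫ ω, (∑ i, X i ω) / n ∂μ) ≥ t}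
      = {ω | n * t ≤ ∑ i, (X i ω - μ[X i])} := by
    ext ω
    rw [Set.mem_ofPred_eq, Set.mem_ofPred_eq, h_mean, Finset.sum_sub_distrib, ge_iff_le,
      div_sub_div_same, le_div_iff₀ hn', mul_comm]
  rw [h_event]
  refine (measureReal_sum_sub_integral_ge_le hindep (fun i ↦ (hmeas i).aemeasurable) hbound
    (mul_pos hn' ht).le).trans_eq ?_
  rw [Fintype.card_fin, show -2 * ((n : ℝ) * t) ^ 2 = n * -(2 * n * t ^ 2) by ring,
    mul_div_mul_left _ _ hn'.ne']

/-- Hoeffding's inequality. -/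
theorem hoeffding_inequality
    {Ω : Type*} [MeasurableSpace Ω] (μ : Measure Ω) [IsProbabilityMeasure μ]
    (n : ℕ) (hn : 0 < n) (X : Fin n → Ω → ℝ) (a b : ℝ) (hab : a ≤ b)
    (hmeas : ∀ i, Measurable (X i))
    (hbound : ∀ i, ∀ᵐ ω ∂μ, X i ω ∈ Set.Icc a b)
    (hindep : iIndepFun X μ)
    (t : ℝ) (ht : 0 < t) :
    (μ {ω | (∑ i, X i ω) / n - (∫ ω, (∑ i, X i ω) / n ∂μ) ≥ t}).toReal
      ≤ Real.exp (-(2 * n * t ^ 2) / (b - a) ^ 2) :=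
  hoeffding_inequality_general μ n hn X a b hmeas hbound hindep t ht
end
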